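/- Let n and k be positive integers and w : {-1,1}^n → [0,∞) a weight function with nonempty support. Let c₁,…,c_k be independent, each uniform on {-1,1}^n, and set δ̄_k(w) = (1/k)·Σ_{i=1}^k δ(c_i, w). Then with probability at least 1 − 2·exp(−3), both δ̄_k(w) − √(6n/k) − n/2 ≤ log₂ Z(w) and log₂ Z(w) ≤ δ̄_k(w) + √(6n/k) + n·log₂(3/2) hold. -/

import Mathlib

/-!
Flipping one coordinate of `c` changes every `⟨c, x⟩` by at most `2`, hence changes `δ(c, w)` by at
most `2`. McDiarmid's inequality on the cube `{-1,1}^(nk)` then puts `Σ_i δ(c_i, w)` within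
`k √(6n/k)` of `k R(w)` outside a set of probability `2 e^(-3)`. It remains to locate the mean:
`log₂ Z(w) - n log₂ (3/2) ≤ R(w) ≤ log₂ Z(w) + n log₂ (5/4)`, and `log₂ (5/4) ≤ 1/2`.
-/

open Finset

/-- Map a boolean to the corresponding element of `{-1, 1} ⊆ ℝ`. -/
noncomputable def sgn (b : Bool) : ℝ := if b then 1 else -1

/-- Standard inner product on `ℝ^ι` restricted to the cube `{-1,1}^ι`. -/
noncomputable def ip {ι : Type*} [Fintype ι] [DecidableEq ι] (c x : ι → Bool) : ℝ :=
  ∑ i, sgn (c i) * sgn (x i)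

/-- `δ(c, w)`: the maximum over the support of `w` of `⟨c,x⟩ + log₂ w(x)`. -/
noncomputable def wdelta {ι : Type*} [Fintype ι] [DecidableEq ι] (c : ι → Bool) (w : (ι → Bool) → ℝ) : ℝ :=
  sSup {y : ℝ | ∃ x, 0 < w x ∧ y = ip c x + Real.logb 2 (w x)}

/-- The weighted Rademacher complexity `R(w) = E_c[δ(c,w)]`, `c` uniform on the cube. -/
noncomputable def wRad {ι : Type*} [Fintype ι] [DecidableEq ι] (w : (ι → Bool) → ℝ) : ℝ :=
  (∑ c : ι → Bool, wdelta c w) / 2 ^ (Fintype.card ι)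

/-- `Z(w)`: the total weight. -/
noncomputable def Zw {ι : Type*} [Fintype ι] [DecidableEq ι] (w : (ι → Bool) → ℝ) : ℝ := ∑ x, w x

/-- `w_min`: the smallest positive weight. -/
noncomputable def wmin {ι : Type*} [Fintype ι] [DecidableEq ι] (w : (ι → Bool) → ℝ) : ℝ :=
  sInf {y : ℝ | ∃ x, 0 < w x ∧ y = w x}

/-- `w_max`: the largest weight. -/
noncomputable def wmax {ι : Type*} [Fintype ι] [DecidableEq ι] (w : (ι → Bool) → ℝ) : ℝ :=
  sSup {y : ℝ | ∃ x, y = w x}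

open Real

section Delta

variable {ι : Type*} [Fintype ι] [DecidableEq ι] {w : (ι → Bool) → ℝ}

lemma finite_wdelta_set (c : ι → Bool) (w : (ι → Bool) → ℝ) :
    {y : ℝ | ∃ x, 0 < w x ∧ y = ip c x + logb 2 (w x)}.Finite :=
  (Set.finite_range fun x => ip c x + logb 2 (w x)).subset <| by
    rintro _ ⟨x, -, rfl⟩
    exact ⟨x, rfl⟩

lemma le_wdelta (c : ι → Bool) {x : ι → Bool} (hx : 0 < w x) :
    ip c x + logb 2 (w x) ≤ wdelta c w :=
  le_csSup (finite_wdelta_set c w).bddAbove ⟨x, hx, rfl⟩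

lemma exists_wdelta_eq (c : ι → Bool) (hs : ∃ x, 0 < w x) :
    ∃ x, 0 < w x ∧ wdelta c w = ip c x + logb 2 (w x) := by
  obtain ⟨x, hx⟩ := hs
  refine Set.Nonempty.csSup_mem ?_ (finite_wdelta_set c w)
  exact ⟨_, x, hx, rfl⟩

lemma wdelta_le_wdelta_add {c c' : ι → Bool} (hs : ∃ x, 0 < w x) {D : ℝ}
    (h : ∀ x, ip c x ≤ ip c' x + D) : wdelta c w ≤ wdelta c' w + D := by
  obtain ⟨x, hx, hδ⟩ := exists_wdelta_eq c hs
  linarith [h x, le_wdelta c' hx]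

lemma ip_update_le (c x : ι → Bool) (j : ι) (a b : Bool) :
    ip (Function.update c j a) x ≤ ip (Function.update c j b) x + 2 := by
  have hsub : ip (Function.update c j a) x - ip (Function.update c j b) x
      = (sgn a - sgn b) * sgn (x j) := by
    rw [ip, ip, ← Finset.sum_sub_distrib, Finset.sum_eq_single j (fun i _ hij => by
      simp [Function.update_of_ne hij]) (by simp)]
    simp [sub_mul]
  have hbound : (sgn a - sgn b) * sgn (x j) ≤ 2 := by
    cases a <;> cases b <;> cases x j <;> norm_num [sgn]
  linarith

lemma abs_wdelta_update_sub_le (hs : ∃ x, 0 < w x) (j : ι) (c : ι → Bool) :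
    |wdelta (Function.update c j true) w - wdelta (Function.update c j false) w| ≤ 2 :=
  abs_sub_le_iff.2
    ⟨by linarith [wdelta_le_wdelta_add (w := w) hs (ip_update_le c · j true false)],
     by linarith [wdelta_le_wdelta_add (w := w) hs (ip_update_le c · j false true)]⟩

end Delta

lemma ip_cons {n : ℕ} (e : Bool) (c : Fin n → Bool) (s : Bool) (x : Fin n → Bool) :
    ip (Fin.cons e c : Fin (n + 1) → Bool) (Fin.cons s x) = sgn e * sgn s + ip c x := by
  simp [ip, Fin.sum_univ_succ]

lemma le_wdelta_cons {n : ℕ} {w : (Fin (n + 1) → Bool) → ℝ} (e : Bool) (c : Fin n → Bool)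
    {b : Bool} (hb : ∃ x, 0 < w (Fin.cons b x)) :
    sgn e * sgn b + wdelta c (fun x => w (Fin.cons b x)) ≤ wdelta (Fin.cons e c) w := by
  obtain ⟨x, hx, hδ⟩ := exists_wdelta_eq c hb
  have := le_wdelta (Fin.cons e c) hx
  rw [ip_cons] at this
  linarith

lemma sum_cube_succ {M : Type*} [AddCommMonoid M] {m : ℕ} (F : (Fin (m + 1) → Bool) → M) :
    ∑ c, F c = ∑ c : Fin m → Bool, (F (Fin.cons true c) + F (Fin.cons false c)) := by
  rw [← (Fin.consEquiv fun _ => Bool).sum_comp F, Fintype.sum_prod_type_right]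
  exact Finset.sum_congr rfl fun c _ => Fintype.sum_bool _

section Concentration

lemma exp_add_exp_le_of_abs_sub_le {a b D : ℝ} (t : ℝ) (h : |a - b| ≤ D) :
    exp (t * a) + exp (t * b) ≤ 2 * exp (t ^ 2 * D ^ 2 / 8 + t * ((a + b) / 2)) := by
  have hcosh : exp (t * a) + exp (t * b)
      = 2 * exp (t * ((a + b) / 2)) * cosh (t * ((a - b) / 2)) := by
    have ha : t * a = t * ((a + b) / 2) + t * ((a - b) / 2) := by ring
    have hb : t * b = t * ((a + b) / 2) + -(t * ((a - b) / 2)) := by ring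
    rw [ha, hb, exp_add, exp_add, cosh_eq]
    ring
  have hsq : (t * ((a - b) / 2)) ^ 2 / 2 ≤ t ^ 2 * D ^ 2 / 8 := by
    have : (a - b) ^ 2 ≤ D ^ 2 := sq_le_sq' (abs_le.1 h).1 (abs_le.1 h).2
    nlinarith [sq_nonneg t]
  calc exp (t * a) + exp (t * b)
      ≤ 2 * exp (t * ((a + b) / 2)) * exp (t ^ 2 * D ^ 2 / 8) := by
        rw [hcosh]
        gcongr
        exact (cosh_le_exp_half_sq _).trans (exp_le_exp.2 hsq)
    _ = 2 * exp (t ^ 2 * D ^ 2 / 8 + t * ((a + b) / 2)) := by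
        rw [exp_add]
        ring

/-- McDiarmid's bound on the moment generating function, by induction averaging out the first
coordinate and applying Hoeffding's lemma to the two values it takes. -/
lemma sum_exp_le_of_bounded_differences {D : ℝ} (t : ℝ) :
    ∀ {m : ℕ} (g : (Fin m → Bool) → ℝ),
      (∀ j c, |g (Function.update c j true) - g (Function.update c j false)| ≤ D) →
      ∑ c, exp (t * g c) ≤ 2 ^ m * exp (t ^ 2 * D ^ 2 * m / 8 + t * ((∑ c, g c) / 2 ^ m))
  | 0, g, _ => by simp
  | m + 1, g, hg => by
    set g' : (Fin m → Bool) → ℝ := fun c => (g (Fin.cons true c) + g (Fin.cons false c)) / 2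
    have hg' : ∀ j c, |g' (Function.update c j true) - g' (Function.update c j false)| ≤ D := by
      intro j c
      have hT := abs_le.1 (hg j.succ (Fin.cons true c))
      have hF := abs_le.1 (hg j.succ (Fin.cons false c))
      simp only [g', Fin.cons_update] at hT hF ⊢
      exact abs_le.2 ⟨by linarith, by linarith⟩
    have hfirst : ∀ c, |g (Fin.cons true c) - g (Fin.cons false c)| ≤ D := fun c => by
      simpa only [Fin.update_cons_zero] using hg 0 (Fin.cons true c)
    have hsum : ∑ c, g' c = (∑ c, g c) / 2 := by
      rw [sum_cube_succ g, Finset.sum_div]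
    calc ∑ c, exp (t * g c)
        = ∑ c : Fin m → Bool, (exp (t * g (Fin.cons true c)) + exp (t * g (Fin.cons false c))) :=
          sum_cube_succ _
      _ ≤ ∑ c, 2 * exp (t ^ 2 * D ^ 2 / 8 + t * g' c) :=
          Finset.sum_le_sum fun c _ => exp_add_exp_le_of_abs_sub_le t (hfirst c)
      _ = 2 * exp (t ^ 2 * D ^ 2 / 8) * ∑ c, exp (t * g' c) := by
          simp only [Finset.mul_sum, exp_add, mul_assoc]
      _ ≤ 2 * exp (t ^ 2 * D ^ 2 / 8) *
            (2 ^ m * exp (t ^ 2 * D ^ 2 * m / 8 + t * ((∑ c, g' c) / 2 ^ m))) := by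
          gcongr
          exact sum_exp_le_of_bounded_differences t g' hg'
      _ = 2 ^ (m + 1) * exp (t ^ 2 * D ^ 2 * ↑(m + 1) / 8 + t * ((∑ c, g c) / 2 ^ (m + 1))) := by
          have hexp : t ^ 2 * D ^ 2 * ↑(m + 1) / 8 + t * ((∑ c, g c) / 2 ^ (m + 1))
              = t ^ 2 * D ^ 2 / 8 + (t ^ 2 * D ^ 2 * m / 8 + t * ((∑ c, g c) / 2 / 2 ^ m)) := by
            push_cast
            ring
          rw [hsum, hexp, exp_add (t ^ 2 * D ^ 2 / 8)]
          ring

lemma sum_exp_mul_sum_comp {α : Type*} [Fintype α] (f : α → ℝ) (s : ℝ) (k : ℕ) :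
    ∑ c : Fin k → α, exp (s * ∑ i, f (c i)) = (∑ a, exp (s * f a)) ^ k := by
  simp only [Fintype.sum_pow, Finset.mul_sum, exp_sum]

lemma sum_exp_sum_le_of_bounded_differences {D : ℝ} {m : ℕ} {g : (Fin m → Bool) → ℝ}
    (hg : ∀ j c, |g (Function.update c j true) - g (Function.update c j false)| ≤ D)
    (k : ℕ) (s : ℝ) :
    ∑ c : Fin k → Fin m → Bool, exp (s * ∑ i, g (c i))
      ≤ 2 ^ (m * k) * exp (s ^ 2 * (k * m * D ^ 2 / 4) / 2 + s * (k * ((∑ c, g c) / 2 ^ m))) := by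
  rw [sum_exp_mul_sum_comp]
  calc (∑ c, exp (s * g c)) ^ k
      ≤ (2 ^ m * exp (s ^ 2 * D ^ 2 * m / 8 + s * ((∑ c, g c) / 2 ^ m))) ^ k := by
        exact pow_le_pow_left₀ (Finset.sum_nonneg fun c _ => (exp_pos _).le)
          (sum_exp_le_of_bounded_differences s g hg) k
    _ = _ := by
        rw [mul_pow, ← pow_mul, ← exp_nat_mul]
        ring_nf

/-- The Chernoff bound for a sub-Gaussian function on a finite set, counted rather than
normalised: `V` plays the variance and `m` the mean. -/
lemma card_le_of_sum_exp_le {α : Type*} [Fintype α] (S : α → ℝ) {N V m u : ℝ} (hV : 0 < V)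
    (hu : 0 ≤ u) (hS : ∀ s, ∑ a, exp (s * S a) ≤ N * exp (s ^ 2 * V / 2 + s * m)) :
    ((Finset.univ.filter fun a => m + u ≤ S a).card : ℝ) ≤ N * exp (-(u ^ 2 / (2 * V))) := by
  set s := u / V
  have hs : 0 ≤ s := div_nonneg hu hV.le
  have hmarkov : ((Finset.univ.filter fun a => m + u ≤ S a).card : ℝ) * exp (s * (m + u))
      ≤ ∑ a, exp (s * S a) := by
    rw [← nsmul_eq_mul]
    refine (Finset.card_nsmul_le_sum _ _ _ fun a ha => ?_).trans
      (Finset.sum_le_sum_of_subset_of_nonneg (Finset.filter_subset _ _)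
        fun a _ _ => (exp_pos _).le)
    exact exp_le_exp.2 (mul_le_mul_of_nonneg_left (Finset.mem_filter.1 ha).2 hs)
  have hexp : s ^ 2 * V / 2 + s * m = s * (m + u) + -(u ^ 2 / (2 * V)) := by
    simp only [s]
    field_simp
    ring
  refine le_of_mul_le_mul_right ?_ (exp_pos (s * (m + u)))
  calc _ ≤ _ := hmarkov
    _ ≤ _ := hS s
    _ = _ := by rw [hexp, exp_add]; ring

lemma card_sub_le_card_abs_sub_lt {α : Type*} [Fintype α] (S : α → ℝ) {N V m u : ℝ}
    (hV : 0 < V) (hu : 0 ≤ u) (hS : ∀ s, ∑ a, exp (s * S a) ≤ N * exp (s ^ 2 * V / 2 + s * m)) :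
    (Fintype.card α : ℝ) - 2 * (N * exp (-(u ^ 2 / (2 * V))))
      ≤ (Finset.univ.filter fun a => |S a - m| < u).card := by
  classical
  have hupper := card_le_of_sum_exp_le S hV hu hS
  have hlower := card_le_of_sum_exp_le (fun a => -S a) (N := N) (m := -m) hV hu fun s => by
    simpa only [mul_neg, neg_mul, neg_sq] using hS (-s)
  have hbad : (Finset.univ.filter fun a => ¬ |S a - m| < u)
      ⊆ (Finset.univ.filter fun a => m + u ≤ S a) ∪ Finset.univ.filter fun a => -m + u ≤ -S a := by
    intro a
    simp only [Finset.mem_filter, Finset.mem_univ, true_and, Finset.mem_union, not_lt, le_abs']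
    rintro (h | h) <;> [right; left] <;> linarith
  have hcount := (Finset.card_filter_add_card_filter_not (s := Finset.univ)
    fun a => |S a - m| < u).ge.trans
      (add_le_add_right ((Finset.card_le_card hbad).trans (Finset.card_union_le _ _)) _)
  rw [Finset.card_univ] at hcount
  have hcountR := (Nat.cast_le (α := ℝ)).2 hcount
  push_cast at hcountR
  linarith

end Concentration

section Mean

variable {ι : Type*} [Fintype ι] [DecidableEq ι] {w : (ι → Bool) → ℝ}

lemma Zw_pos (hw : ∀ x, 0 ≤ w x) (hs : ∃ x, 0 < w x) : 0 < Zw w := by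
  obtain ⟨x, hx⟩ := hs
  exact hx.trans_le (Finset.single_le_sum (fun y _ => hw y) (Finset.mem_univ x))

lemma Zw_eq_zero (hw : ∀ x, 0 ≤ w x) (hs : ¬ ∃ x, 0 < w x) : Zw w = 0 :=
  Finset.sum_eq_zero fun x _ => le_antisymm (not_lt.1 fun hx => hs ⟨x, hx⟩) (hw x)

lemma sum_rpow_ip (x : ι → Bool) :
    ∑ c : ι → Bool, (2 : ℝ) ^ ip c x = (5 / 2) ^ Fintype.card ι := by
  have hfactor : ∀ i, ∑ b : Bool, (2 : ℝ) ^ (sgn b * sgn (x i)) = 5 / 2 := fun i => by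
    cases x i <;> norm_num [sgn, Real.rpow_neg_one]
  simp only [ip, Real.rpow_sum_of_pos two_pos]
  rw [← Fintype.prod_sum fun i b => (2 : ℝ) ^ (sgn b * sgn (x i))]
  simp only [hfactor, Finset.prod_const, Finset.card_univ]

lemma rpow_wdelta_le (hw : ∀ x, 0 ≤ w x) (hs : ∃ x, 0 < w x) (c : ι → Bool) :
    (2 : ℝ) ^ wdelta c w ≤ ∑ x, w x * 2 ^ ip c x := by
  obtain ⟨x, hx, hδ⟩ := exists_wdelta_eq c hs
  rw [hδ, Real.rpow_add two_pos, Real.rpow_logb two_pos (by norm_num) hx, mul_comm]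
  exact Finset.single_le_sum (f := fun x => w x * 2 ^ ip c x)
    (fun y _ => mul_nonneg (hw y) (Real.rpow_nonneg zero_le_two _)) (Finset.mem_univ x)

/-- By Jensen, `2 ^ R(w)` is at most the mean of `2 ^ δ(c, w) ≤ Σ_x w(x) 2 ^ ⟨c, x⟩`, and the mean
of `2 ^ ⟨c, x⟩` over `c` is `(5/4) ^ n`. -/
lemma wRad_le_logb_Zw_add (hw : ∀ x, 0 ≤ w x) (hs : ∃ x, 0 < w x) :
    wRad w ≤ logb 2 (Zw w) + Fintype.card ι * logb 2 (5 / 4) := by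
  have hweights : ∑ _c : ι → Bool, 1 / (2 : ℝ) ^ Fintype.card ι = 1 := by
    simp [Fintype.card_bool]
  have hjensen := (convexOn_rpow_left two_pos).map_sum_le (t := Finset.univ)
    (p := fun c => wdelta c w) (fun c _ => by positivity) hweights (fun c _ => Set.mem_univ _)
  simp only [smul_eq_mul] at hjensen
  have hbound : (2 : ℝ) ^ wRad w ≤ Zw w * (5 / 4) ^ Fintype.card ι :=
    calc (2 : ℝ) ^ wRad w = 2 ^ ∑ c, 1 / 2 ^ Fintype.card ι * wdelta c w := by
          rw [wRad, ← Finset.mul_sum, one_div, ← div_eq_inv_mul]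
      _ ≤ ∑ c, 1 / 2 ^ Fintype.card ι * 2 ^ wdelta c w := hjensen
      _ ≤ ∑ c, 1 / 2 ^ Fintype.card ι * ∑ x, w x * 2 ^ ip c x :=
          Finset.sum_le_sum fun c _ => by gcongr; exact rpow_wdelta_le hw hs c
      _ = 1 / 2 ^ Fintype.card ι * ∑ x, w x * (5 / 2) ^ Fintype.card ι := by
          rw [← Finset.mul_sum, Finset.sum_comm]
          simp only [← Finset.mul_sum, sum_rpow_ip]
      _ = Zw w * (5 / 4) ^ Fintype.card ι := by
          rw [← Finset.sum_mul, Zw, show (5 / 4 : ℝ) ^ Fintype.card ι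
            = (5 / 2) ^ Fintype.card ι / 2 ^ Fintype.card ι by rw [← div_pow]; norm_num]
          ring
  rw [← Real.logb_pow, ← Real.logb_mul (Zw_pos hw hs).ne' (by positivity),
    Real.le_logb_iff_rpow_le one_lt_two (by have := Zw_pos hw hs; positivity)]
  exact hbound

end Mean

section LowerBound

/-- Either one of `A`, `B` carries two thirds of `A + B`, or `A + B ≤ 3 √(A B)`. -/
lemma logb_add_sub_le_or {A B : ℝ} (hA : 0 < A) (hB : 0 < B) :
    logb 2 (A + B) - logb 2 (3 / 2) ≤ logb 2 A ∨ logb 2 (A + B) - logb 2 (3 / 2) ≤ logb 2 B ∨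
      logb 2 (A + B) - logb 2 (3 / 2) ≤ (logb 2 A + logb 2 B) / 2 + 1 := by
  rw [← Real.logb_div (by positivity) (by norm_num)]
  rcases le_or_gt (2 * B) A with hBA | hBA
  · exact Or.inl (Real.logb_le_logb_of_le one_lt_two (by positivity) (by linarith))
  rcases le_or_gt (2 * A) B with hAB | hAB
  · exact Or.inr (Or.inl (Real.logb_le_logb_of_le one_lt_two (by positivity) (by linarith)))
  refine Or.inr (Or.inr ?_)
  have hsq : ((A + B) / (3 / 2)) ^ 2 ≤ 2 ^ 2 * (A * B) := by nlinarith
  have hlog := Real.logb_le_logb_of_le one_lt_two (by positivity) hsq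
  rw [Real.logb_pow, Real.logb_mul (by positivity) (by positivity), Real.logb_pow,
    Real.logb_self_eq_one one_lt_two, Real.logb_mul hA.ne' hB.ne'] at hlog
  push_cast at hlog
  linarith

variable {n : ℕ} {w : (Fin (n + 1) → Bool) → ℝ}

lemma Zw_eq_add_cons (w : (Fin (n + 1) → Bool) → ℝ) :
    Zw w = Zw (fun x => w (Fin.cons true x)) + Zw (fun x => w (Fin.cons false x)) := by
  rw [Zw, Zw, Zw, sum_cube_succ, Finset.sum_add_distrib]

lemma two_mul_sum_wdelta_cons_le {b : Bool} (hb : ∃ x, 0 < w (Fin.cons b x)) :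
    2 * ∑ c, wdelta c (fun x => w (Fin.cons b x)) ≤ ∑ c, wdelta c w := by
  rw [sum_cube_succ, Finset.mul_sum]
  refine Finset.sum_le_sum fun c _ => ?_
  have hT := le_wdelta_cons true c hb
  have hF := le_wdelta_cons false c hb
  have hsgn : sgn true * sgn b + sgn false * sgn b = 0 := by cases b <;> norm_num [sgn]
  linarith

lemma sum_wdelta_cons_add_le (hT : ∃ x, 0 < w (Fin.cons true x))
    (hF : ∃ x, 0 < w (Fin.cons false x)) :
    ∑ c, wdelta c (fun x => w (Fin.cons true x)) + ∑ c, wdelta c (fun x => w (Fin.cons false x))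
      + 2 * 2 ^ n ≤ ∑ c, wdelta c w := by
  have hconst : 2 * (2 : ℝ) ^ n = ∑ _c : Fin n → Bool, 2 := by simp [mul_comm]
  rw [hconst, ← Finset.sum_add_distrib, ← Finset.sum_add_distrib, sum_cube_succ]
  refine Finset.sum_le_sum fun c _ => ?_
  have hT' := le_wdelta_cons true c hT
  have hF' := le_wdelta_cons false c hF
  have hsgn : ∀ e, sgn e * sgn e = 1 := by intro e; cases e <;> norm_num [sgn]
  linarith [hsgn true, hsgn false]

lemma two_pow_succ_mul_le_of_half {b : Bool} (hb : ∃ x, 0 < w (Fin.cons b x))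
    (ih : 2 ^ n * (logb 2 (Zw fun x => w (Fin.cons b x)) - n * logb 2 (3 / 2))
      ≤ ∑ c, wdelta c (fun x => w (Fin.cons b x)))
    (hZ : logb 2 (Zw w) - logb 2 (3 / 2) ≤ logb 2 (Zw fun x => w (Fin.cons b x))) :
    2 ^ (n + 1) * (logb 2 (Zw w) - ↑(n + 1) * logb 2 (3 / 2)) ≤ ∑ c, wdelta c w :=
  calc 2 ^ (n + 1) * (logb 2 (Zw w) - ↑(n + 1) * logb 2 (3 / 2))
      ≤ 2 * (2 ^ n * (logb 2 (Zw fun x => w (Fin.cons b x)) - n * logb 2 (3 / 2))) := by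
        rw [pow_succ]
        push_cast
        nlinarith [pow_pos (two_pos : (0 : ℝ) < 2) n]
    _ ≤ 2 * ∑ c, wdelta c (fun x => w (Fin.cons b x)) := by gcongr
    _ ≤ _ := two_mul_sum_wdelta_cons_le hb

lemma two_pow_succ_mul_le_of_halves (hT : ∃ x, 0 < w (Fin.cons true x))
    (hF : ∃ x, 0 < w (Fin.cons false x))
    (ihT : 2 ^ n * (logb 2 (Zw fun x => w (Fin.cons true x)) - n * logb 2 (3 / 2))
      ≤ ∑ c, wdelta c (fun x => w (Fin.cons true x)))
    (ihF : 2 ^ n * (logb 2 (Zw fun x => w (Fin.cons false x)) - n * logb 2 (3 / 2))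
      ≤ ∑ c, wdelta c (fun x => w (Fin.cons false x)))
    (hZ : logb 2 (Zw w) - logb 2 (3 / 2)
      ≤ (logb 2 (Zw fun x => w (Fin.cons true x)) + logb 2 (Zw fun x => w (Fin.cons false x))) / 2
        + 1) :
    2 ^ (n + 1) * (logb 2 (Zw w) - ↑(n + 1) * logb 2 (3 / 2)) ≤ ∑ c, wdelta c w := by
  refine le_trans ?_ (sum_wdelta_cons_add_le hT hF)
  rw [pow_succ]
  push_cast
  nlinarith [pow_pos (two_pos : (0 : ℝ) < 2) n]

end LowerBound

/-- Induction on `n`, splitting the cube along the first coordinate: `δ(c, w)` dominates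
`±1 + δ(c', w_b)` for each half `w_b` with nonempty support, and `logb_add_sub_le_or` decides which
of these bounds to use. -/
lemma two_pow_mul_le_sum_wdelta : ∀ {n : ℕ} {w : (Fin n → Bool) → ℝ}, (∀ x, 0 ≤ w x) →
    (∃ x, 0 < w x) → 2 ^ n * (logb 2 (Zw w) - n * logb 2 (3 / 2)) ≤ ∑ c, wdelta c w
  | 0, w, _, hs => by
    obtain ⟨x, hx⟩ := hs
    have hip : ∀ c x : Fin 0 → Bool, ip c x = 0 := by simp [ip]
    simpa [Zw, Unique.eq_default x, hip] using le_wdelta x hx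
  | n + 1, w, hw, hs => by
    have ih := fun b (hb : ∃ x, 0 < w (Fin.cons b x)) =>
      two_pow_mul_le_sum_wdelta (fun x => hw _) hb
    have hβ : 0 ≤ logb 2 (3 / 2) := Real.logb_nonneg one_lt_two (by norm_num)
    have hZ := Zw_eq_add_cons w
    by_cases hT : ∃ x, 0 < w (Fin.cons true x) <;> by_cases hF : ∃ x, 0 < w (Fin.cons false x)
    · rcases logb_add_sub_le_or (Zw_pos (fun x => hw _) hT) (Zw_pos (fun x => hw _) hF)
        with h | h | h
      · exact two_pow_succ_mul_le_of_half hT (ih true hT) (hZ ▸ h)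
      · exact two_pow_succ_mul_le_of_half hF (ih false hF) (hZ ▸ h)
      · exact two_pow_succ_mul_le_of_halves hT hF (ih true hT) (ih false hF) (hZ ▸ h)
    · refine two_pow_succ_mul_le_of_half hT (ih true hT) ?_
      rw [hZ, Zw_eq_zero (fun x => hw _) hF, add_zero]
      linarith
    · refine two_pow_succ_mul_le_of_half hF (ih false hF) ?_
      rw [hZ, Zw_eq_zero (fun x => hw _) hT, zero_add]
      linarith
    · exfalso
      obtain ⟨x, hx⟩ := hs
      rw [← Fin.cons_self_tail x] at hx
      cases h0 : x 0 <;> rw [h0] at hx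
      exacts [hF ⟨_, hx⟩, hT ⟨_, hx⟩]

lemma logb_Zw_sub_le_wRad {n : ℕ} {w : (Fin n → Bool) → ℝ} (hw : ∀ x, 0 ≤ w x)
    (hs : ∃ x, 0 < w x) : logb 2 (Zw w) - n * logb 2 (3 / 2) ≤ wRad w := by
  rw [wRad, Fintype.card_fin, le_div_iff₀ (by positivity), mul_comm]
  exact two_pow_mul_le_sum_wdelta hw hs

lemma wRad_le_logb_Zw_add_half {ι : Type*} [Fintype ι] [DecidableEq ι] {w : (ι → Bool) → ℝ}
    (hw : ∀ x, 0 ≤ w x) (hs : ∃ x, 0 < w x) :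
    wRad w ≤ logb 2 (Zw w) + Fintype.card ι / 2 := by
  have hlogb : logb 2 (5 / 4) ≤ 1 / 2 := by
    rw [Real.logb_le_iff_le_rpow one_lt_two (by norm_num), ← Real.sqrt_eq_rpow,
      Real.le_sqrt (by norm_num) zero_le_two]
    norm_num
  nlinarith [wRad_le_logb_Zw_add hw hs, (Nat.cast_nonneg _ : (0 : ℝ) ≤ Fintype.card ι)]

lemma card_abs_sum_wdelta_sub_lt_ge {n k : ℕ} (hn : 0 < n) (hk : 0 < k)
    {w : (Fin n → Bool) → ℝ} (hs : ∃ x, 0 < w x) :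
    (1 - 2 * exp (-3)) * 2 ^ (n * k) ≤ ((Finset.univ.filter fun c : Fin k → Fin n → Bool =>
      |∑ i, wdelta (c i) w - k * wRad w| < k * √(6 * n / k)).card : ℝ) := by
  have hconc := card_sub_le_card_abs_sub_lt _ (V := k * n * 2 ^ 2 / 4) (u := k * √(6 * n / k))
    (by positivity) (by positivity) (sum_exp_sum_le_of_bounded_differences
      (g := fun c => wdelta c w) (abs_wdelta_update_sub_le hs) k)
  have hexponent : (k * √(6 * n / k)) ^ 2 / (2 * (k * n * 2 ^ 2 / 4)) = 3 := by
    rw [mul_pow, Real.sq_sqrt (by positivity)]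
    field_simp
    ring
  have hcard : (Fintype.card (Fin k → Fin n → Bool) : ℝ) = 2 ^ (n * k) := by
    simp [pow_mul]
  have hmean : (∑ c, wdelta c w) / 2 ^ n = wRad w := by rw [wRad, Fintype.card_fin]
  rw [hexponent, hcard, hmean] at hconc
  linarith

theorem stmt6 (n k : ℕ) (hn : 0 < n) (hk : 0 < k) (w : (Fin n → Bool) → ℝ)
    (hw : ∀ x, 0 ≤ w x) (hsupp : ∃ x, 0 < w x) :
    ((Finset.univ.filter (fun c : Fin k → Fin n → Bool =>
        (∑ i, wdelta (c i) w) / k - Real.sqrt (6 * n / k) - n / 2 ≤ Real.logb 2 (Zw w) ∧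
        Real.logb 2 (Zw w) ≤ (∑ i, wdelta (c i) w) / k + Real.sqrt (6 * n / k)
          + n * Real.logb 2 (3 / 2))).card : ℝ) / 2 ^ (n * k)
      ≥ 1 - 2 * Real.exp (-3) := by
  have hkR : (0 : ℝ) < k := Nat.cast_pos.2 hk
  have hupper := wRad_le_logb_Zw_add_half hw hsupp
  have hlower := logb_Zw_sub_le_wRad hw hsupp
  rw [Fintype.card_fin] at hupper
  rw [ge_iff_le, le_div_iff₀ (by positivity)]
  refine (card_abs_sum_wdelta_sub_lt_ge hn hk hsupp).trans <| Nat.cast_le.2 <|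
    Finset.card_le_card <| Finset.monotone_filter_right _ fun c _ hc => ?_
  set S := ∑ i, wdelta (c i) w
  rw [abs_sub_lt_iff] at hc
  constructor
  · linarith [(div_lt_iff₀ hkR).2 (by linarith : S < (wRad w + √(6 * n / k)) * k)]
  · linarith [(lt_div_iff₀ hkR).2 (by linarith : (wRad w - √(6 * n / k)) * k < S)]
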